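/- arXiv:1010.2320 — 3 statements merged into one kernel-verified Lean document; each statement's English description precedes it below -/
import Mathlib

section
/- Let A ⊂ ℝⁿ be a compact uniformly convex set with modulus of convexity δ_A, let Δ ∈ (0,1/2), and suppose ε_Δ ∈ (0, diam A) satisfies δ_A(ε_Δ)/ε_Δ = Δ/(4 − Δ²). Let p₁, p₂ ∈ ℝⁿ with ‖p₁‖ = 1 and 1 − Δ²/2 ≤ ‖p₂‖ ≤ 1, and let x₁, x₂ ∈ A be points with ⟨p₁, x₁⟩ = s(p₁, A) and ⟨p₂, x₂⟩ = s(p₂, A). If ‖p₁ − p₂‖ < Δ, then ‖x₁ − x₂‖ < ε_Δ. -/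
open Set Metric Pointwise

/-- Supporting function `s(p, A) = sup_{x ∈ A} ⟪p, x⟫`. -/
noncomputable def suppF {n : ℕ} (p : EuclideanSpace ℝ (Fin n))
    (A : Set (EuclideanSpace ℝ (Fin n))) : ℝ :=
  sSup ((fun x => (inner ℝ p x : ℝ)) '' A)

/-- Modulus of convexity of a set `A`. -/
noncomputable def modConv {n : ℕ} (A : Set (EuclideanSpace ℝ (Fin n))) (ε : ℝ) : ℝ :=
  sSup {δ : ℝ | 0 ≤ δ ∧ ∀ x₁ ∈ A, ∀ x₂ ∈ A, ‖x₁ - x₂‖ = ε →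
    Metric.closedBall (midpoint ℝ x₁ x₂) δ ⊆ A}

/-- `A` is uniformly convex: its modulus of convexity is positive on `(0, diam A)`. -/
def UnifConvex {n : ℕ} (A : Set (EuclideanSpace ℝ (Fin n))) : Prop :=
  ∀ ε : ℝ, 0 < ε → ε < Metric.diam A → 0 < modConv A ε

/-- `C` is a grid with step `Δ`: a finite set of unit vectors such that every nonzero `p`
whose normalization is not in `C` is a positive combination of grid vectors that are
pairwise `Δ`-close. -/
def IsGrid {n : ℕ} (C : Finset (EuclideanSpace ℝ (Fin n))) (Δ : ℝ) : Prop :=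
  (∀ p ∈ C, ‖p‖ = 1) ∧
  ∀ p : EuclideanSpace ℝ (Fin n), p ≠ 0 → ‖p‖⁻¹ • p ∉ C →
    ∃ (k : ℕ) (q : Fin k → EuclideanSpace ℝ (Fin n)) (α : Fin k → ℝ),
      (∀ i, q i ∈ C) ∧ (∀ i, 0 < α i) ∧ p = ∑ i, α i • q i ∧
      ∀ i j, ‖q i - q j‖ < Δ

/-- External polyhedral approximation of `A` on the grid `C`. -/
def polyApprox {n : ℕ} (C : Finset (EuclideanSpace ℝ (Fin n)))
    (A : Set (EuclideanSpace ℝ (Fin n))) : Set (EuclideanSpace ℝ (Fin n)) :=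
  {x | ∀ p ∈ C, (inner ℝ p x : ℝ) ≤ suppF p A}

/-- Geometric (Minkowski–Pontryagin) difference `B ⊖ A = {x | x + A ⊆ B}`. -/
def geomDiff {n : ℕ} (B A : Set (EuclideanSpace ℝ (Fin n))) :
    Set (EuclideanSpace ℝ (Fin n)) :=
  {x | ∀ a ∈ A, x + a ∈ B}

/-!
If `x` maximizes `⟪p, ·⟫` on `A` and `x' ∈ A` is at distance at least `η`, the chord of length
`η` from `x` towards `x'` has its midpoint `x + (η / 2) (x' - x) / ‖x' - x‖`; the ball of radius
`δ_A(η)` around it stays in `A`, so its point in direction `p` does not beat `x`, which gives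
`2 ‖x - x'‖ ‖p‖ δ_A(η) ≤ η ⟪p, x - x'⟫`. Adding this for `(p₁, x₁)` and `(p₂, x₂)` and applying
Cauchy–Schwarz yields `2 (‖p₁‖ + ‖p₂‖) δ_A(η) ≤ η ‖p₁ - p₂‖`. With `η = ε_Δ`, `‖p₁‖ = 1` and
`‖p₁ - p₂‖ < Δ`, the choice `δ_A(ε_Δ) (4 - Δ²) = Δ ε_Δ` then forces `‖p₂‖ < 1 - Δ² / 2`.
-/

section
variable {n : ℕ} {A : Set (EuclideanSpace ℝ (Fin n))}

lemma isMaxOn_inner_of_inner_eq_suppF (hA : Bornology.IsBounded A)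
    {p x : EuclideanSpace ℝ (Fin n)} (hs : (inner ℝ p x : ℝ) = suppF p A) :
    IsMaxOn (fun z => (inner ℝ p z : ℝ)) A x := fun z hz => by
  have hbdd : BddAbove ((fun z => (inner ℝ p z : ℝ)) '' A) :=
    ((innerSL ℝ p).lipschitz.isBounded_image hA).bddAbove
  exact (le_csSup hbdd (mem_image_of_mem _ hz)).trans_eq hs.symm

lemma modConv_nonneg (ε : ℝ) : 0 ≤ modConv A ε :=
  Real.sSup_nonneg fun _ hδ => hδ.1

lemma closedBall_midpoint_modConv_subset (hA : IsClosed A) (hconv : Convex ℝ A)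
    {ε : ℝ} {y₁ y₂ : EuclideanSpace ℝ (Fin n)} (hy₁ : y₁ ∈ A) (hy₂ : y₂ ∈ A)
    (hd : ‖y₁ - y₂‖ = ε) :
    closedBall (midpoint ℝ y₁ y₂) (modConv A ε) ⊆ A := by
  have hmid : midpoint ℝ y₁ y₂ ∈ A :=
    hconv.segment_subset hy₁ hy₂ (midpoint_mem_segment y₁ y₂)
  rcases (modConv_nonneg ε).eq_or_lt with hzero | hpos
  · rw [← hzero, closedBall_zero]
    exact singleton_subset_iff.2 hmid
  have hball : ball (midpoint ℝ y₁ y₂) (modConv A ε) ⊆ A := fun z hz => by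
    rw [mem_ball, modConv] at hz
    obtain ⟨δ, hδ, hlt⟩ := exists_lt_of_lt_csSup (by
      refine ⟨0, le_rfl, fun a ha b hb _ => ?_⟩
      rw [closedBall_zero]
      exact singleton_subset_iff.2 (hconv.segment_subset ha hb (midpoint_mem_segment a b))) hz
    exact hδ.2 y₁ hy₁ y₂ hy₂ hd (mem_closedBall.2 hlt.le)
  rw [← closure_ball _ hpos.ne']
  exact (closure_mono hball).trans hA.closure_subset

lemma two_mul_norm_mul_modConv_le (hA : IsClosed A) (hconv : Convex ℝ A)
    {p x x' : EuclideanSpace ℝ (Fin n)} (hx : x ∈ A) (hx' : x' ∈ A)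
    (hmax : IsMaxOn (fun z => (inner ℝ p z : ℝ)) A x)
    {η : ℝ} (hη : 0 < η) (hηx : η ≤ ‖x - x'‖) :
    2 * ‖x - x'‖ * (‖p‖ * modConv A η) ≤ η * inner ℝ p (x - x') := by
  set ε := ‖x - x'‖
  set s := η / ε
  have hε : 0 < ε := hη.trans_le hηx
  have hs : s * ε = η := div_mul_cancel₀ η hε.ne'
  have hy : x + s • (x' - x) ∈ A :=
    hconv.add_smul_sub_mem hx hx' ⟨(div_pos hη hε).le, div_le_one_of_le₀ hηx hε.le⟩
  have hchord : ‖x - (x + s • (x' - x))‖ = η := by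
    rw [sub_add_cancel_left, norm_neg, norm_smul, norm_sub_rev, Real.norm_of_nonneg
      (div_pos hη hε).le, hs]
  have hmid : midpoint ℝ x (x + s • (x' - x)) = x + (s / 2) • (x' - x) := by
    rw [midpoint_eq_smul_add, invOf_eq_inv]
    module
  set δ := modConv A η
  have hunit : ‖‖p‖⁻¹ • p‖ ≤ 1 := by
    rw [norm_smul, norm_inv, norm_norm]
    exact inv_mul_le_one
  have hz : x + (s / 2) • (x' - x) + δ • (‖p‖⁻¹ • p) ∈ A := by
    refine hmid ▸ closedBall_midpoint_modConv_subset hA hconv hx hy hchord ?_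
    rw [hmid, mem_closedBall, dist_eq_norm, add_sub_cancel_left, norm_smul,
      Real.norm_of_nonneg (modConv_nonneg η)]
    exact mul_le_of_le_one_right (modConv_nonneg η) hunit
  have hpp : (inner ℝ p (‖p‖⁻¹ • p) : ℝ) = ‖p‖ := by
    rw [real_inner_smul_right, real_inner_self_eq_norm_mul_norm, ← mul_assoc, inv_mul_mul_self]
  have key : δ * ‖p‖ ≤ (s / 2) * inner ℝ p (x - x') := by
    have hle : (inner ℝ p (x + (s / 2) • (x' - x) + δ • (‖p‖⁻¹ • p)) : ℝ) ≤ inner ℝ p x :=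
      hmax hz
    rw [inner_add_right, inner_add_right, real_inner_smul_right _ (x' - x),
      real_inner_smul_right _ (‖p‖⁻¹ • p), hpp, ← neg_sub x, inner_neg_right] at hle
    linarith
  calc 2 * ε * (‖p‖ * δ) = 2 * ε * (δ * ‖p‖) := by ring
    _ ≤ 2 * ε * ((s / 2) * inner ℝ p (x - x')) := by gcongr
    _ = η * inner ℝ p (x - x') := by rw [← hs]; ring

lemma two_mul_norm_add_norm_mul_modConv_le (hA : IsClosed A) (hconv : Convex ℝ A)
    {p₁ p₂ x₁ x₂ : EuclideanSpace ℝ (Fin n)} (hx₁ : x₁ ∈ A) (hx₂ : x₂ ∈ A)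
    (hmax₁ : IsMaxOn (fun z => (inner ℝ p₁ z : ℝ)) A x₁)
    (hmax₂ : IsMaxOn (fun z => (inner ℝ p₂ z : ℝ)) A x₂)
    {η : ℝ} (hη : 0 < η) (hηx : η ≤ ‖x₁ - x₂‖) :
    2 * (‖p₁‖ + ‖p₂‖) * modConv A η ≤ η * ‖p₁ - p₂‖ := by
  have hε : 0 < ‖x₁ - x₂‖ := hη.trans_le hηx
  have h₁ := two_mul_norm_mul_modConv_le hA hconv hx₁ hx₂ hmax₁ hη hηx
  have h₂ := two_mul_norm_mul_modConv_le hA hconv hx₂ hx₁ hmax₂ hη (norm_sub_rev x₁ x₂ ▸ hηx)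
  rw [norm_sub_rev] at h₂
  have hsplit : (inner ℝ (p₁ - p₂) (x₁ - x₂) : ℝ)
      = inner ℝ p₁ (x₁ - x₂) + inner ℝ p₂ (x₂ - x₁) := by
    rw [inner_sub_left, sub_eq_add_neg, ← inner_neg_right, neg_sub]
  have hcs := real_inner_le_norm (p₁ - p₂) (x₁ - x₂)
  refine le_of_mul_le_mul_right ?_ hε
  nlinarith [mul_le_mul_of_nonneg_left hcs hη.le]

end

theorem maximizers_close_of_step_close_general
    (n : ℕ) (A : Set (EuclideanSpace ℝ (Fin n)))
    (hA : IsCompact A) (hconv : Convex ℝ A)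
    (Δ εΔ : ℝ) (hΔ : Δ ∈ Set.Ioo (0 : ℝ) (1/2))
    (hεΔ : εΔ ∈ Set.Ioo 0 (Metric.diam A))
    (heq : modConv A εΔ / εΔ = Δ / (4 - Δ^2))
    (p₁ p₂ x₁ x₂ : EuclideanSpace ℝ (Fin n))
    (hp₁ : ‖p₁‖ = 1) (hp₂ : 1 - Δ^2 / 2 ≤ ‖p₂‖)
    (hx₁ : x₁ ∈ A) (hx₂ : x₂ ∈ A)
    (hs₁ : (inner ℝ p₁ x₁ : ℝ) = suppF p₁ A) (hs₂ : (inner ℝ p₂ x₂ : ℝ) = suppF p₂ A)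
    (hpp : ‖p₁ - p₂‖ < Δ) :
    ‖x₁ - x₂‖ < εΔ := by
  obtain ⟨hΔ0, hΔhalf⟩ := hΔ
  have hεΔ0 : 0 < εΔ := hεΔ.1
  by_contra! hfar
  have hbound := two_mul_norm_add_norm_mul_modConv_le hA.isClosed hconv hx₁ hx₂
    (isMaxOn_inner_of_inner_eq_suppF hA.isBounded hs₁)
    (isMaxOn_inner_of_inner_eq_suppF hA.isBounded hs₂) hεΔ0 hfar
  have hδ : modConv A εΔ * (4 - Δ ^ 2) = Δ * εΔ := by
    rw [div_eq_div_iff hεΔ0.ne' (by nlinarith)] at heq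
    linarith
  rw [hp₁] at hbound
  nlinarith [mul_lt_mul_of_pos_left hpp hεΔ0,
    mul_nonneg (modConv_nonneg (A := A) εΔ) (sub_nonneg.2 hp₂)]

/-- Corollary 2.4: if `‖p₁ - p₂‖ < Δ` then the corresponding maximizers
are within `ε(Δ)` where `ε(Δ)` solves `δ_A(ε)/ε = Δ/(4 - Δ²)`. -/
theorem maximizers_close_of_step_close
    (n : ℕ) (A : Set (EuclideanSpace ℝ (Fin n)))
    (hA : IsCompact A) (hconv : Convex ℝ A) (huc : UnifConvex A)
    (Δ εΔ : ℝ) (hΔ : Δ ∈ Set.Ioo (0 : ℝ) (1/2))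
    (hεΔ : εΔ ∈ Set.Ioo 0 (Metric.diam A))
    (heq : modConv A εΔ / εΔ = Δ / (4 - Δ^2))
    (p₁ p₂ x₁ x₂ : EuclideanSpace ℝ (Fin n))
    (hp₁ : ‖p₁‖ = 1) (hp₂ : 1 - Δ^2 / 2 ≤ ‖p₂‖) (hp₂' : ‖p₂‖ ≤ 1)
    (hx₁ : x₁ ∈ A) (hx₂ : x₂ ∈ A)
    (hs₁ : (inner ℝ p₁ x₁ : ℝ) = suppF p₁ A) (hs₂ : (inner ℝ p₂ x₂ : ℝ) = suppF p₂ A)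
    (hpp : ‖p₁ - p₂‖ < Δ) :
    ‖x₁ - x₂‖ < εΔ :=
  maximizers_close_of_step_close_general n A hA hconv Δ εΔ hΔ hεΔ heq p₁ p₂ x₁ x₂ hp₁ hp₂ hx₁ hx₂
    hs₁ hs₂ hpp
end

section
/- Let A ⊂ ℝⁿ be a compact uniformly convex set with modulus of convexity δ_A, let Δ ∈ (0,1/2), and suppose ε_Δ ∈ (0, diam A) satisfies δ_A(ε_Δ)/ε_Δ = Δ/(4 − Δ²). Let p₁, p₂ ∈ ℝⁿ with ‖p₁‖ = 1, 1 − Δ²/2 ≤ ‖p₂‖ ≤ 1, and ‖p₁ − p₂‖ < Δ, and let x₁, x₂ ∈ A be points with ⟨p₁, x₁⟩ = s(p₁, A) and ⟨p₂, x₂⟩ = s(p₂, A). Then |s(p₁,A) − s(p₂,A) − ⟨x₂, p₁ − p₂⟩| ≤ ε_Δ·Δ and |s(p₂,A) − s(p₁,A) − ⟨x₁, p₂ − p₁⟩| ≤ ε_Δ·Δ. -/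
open Set Metric Pointwise

/-!
If the support points `x₁, x₂` were more than `ε_Δ` apart, then shrinking the chord `[x₁, x₂]`
towards points of `A` and re-inflating by balls of radius `δ_A(ε_Δ)` (a geometric series) would
put a ball of radius `δ_A(ε_Δ) ‖x₁ - x₂‖ / ε_Δ` around its midpoint inside `A`. Both supporting
hyperplanes would then stay that far from the midpoint, so that
`⟪p₁ - p₂, x₁ - x₂⟫ ≥ 2 δ_A(ε_Δ) (‖p₁‖ + ‖p₂‖) ‖x₁ - x₂‖ / ε_Δ`, which the choice
`δ_A(ε_Δ) / ε_Δ = Δ / (4 - Δ²)` together with `‖p₂‖ ≥ 1 - Δ² / 2` and `‖p₁ - p₂‖ < Δ` rules out.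
Hence `‖x₁ - x₂‖ ≤ ε_Δ`, and the two errors are nonnegative numbers with sum
`⟪p₁ - p₂, x₁ - x₂⟫ ≤ Δ ε_Δ`.
-/

section NormedSpace

variable {E : Type*} [NormedAddCommGroup E] [NormedSpace ℝ E] {A : Set E} {x₁ x₂ : E} {ε δ : ℝ}

/-- The pair `(1 - t) • xᵢ + t • w` lies in `A`, is `ε` apart, and has midpoint
`lineMap (midpoint ℝ x₁ x₂) w t`. -/
theorem closedBall_lineMap_midpoint_subset (hconv : Convex ℝ A) (hx₁ : x₁ ∈ A) (hx₂ : x₂ ∈ A)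
    {w : E} (hw : w ∈ A) {t : ℝ} (ht₀ : 0 ≤ t) (ht₁ : t ≤ 1) (ht : (1 - t) * ‖x₁ - x₂‖ = ε)
    (hball : ∀ y₁ ∈ A, ∀ y₂ ∈ A, ‖y₁ - y₂‖ = ε → closedBall (midpoint ℝ y₁ y₂) δ ⊆ A) :
    closedBall (AffineMap.lineMap (midpoint ℝ x₁ x₂) w t) δ ⊆ A := by
  have hy₁ : (1 - t) • x₁ + t • w ∈ A := hconv hx₁ hw (by linarith) ht₀ (by ring)
  have hy₂ : (1 - t) • x₂ + t • w ∈ A := hconv hx₂ hw (by linarith) ht₀ (by ring)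
  have hdist : ‖((1 - t) • x₁ + t • w) - ((1 - t) • x₂ + t • w)‖ = ε := by
    rw [add_sub_add_right_eq_sub, ← smul_sub, norm_smul, Real.norm_of_nonneg (by linarith), ht]
  have hmid : midpoint ℝ ((1 - t) • x₁ + t • w) ((1 - t) • x₂ + t • w) =
      AffineMap.lineMap (midpoint ℝ x₁ x₂) w t := by
    simp only [midpoint_eq_smul_add, AffineMap.lineMap_apply_module, invOf_eq_inv]
    module
  simpa only [hmid] using hball _ hy₁ _ hy₂ hdist

theorem midpoint_add_smul_mem_of_le_norm_sub (hconv : Convex ℝ A) (hcl : IsClosed A)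
    (hx₁ : x₁ ∈ A) (hx₂ : x₂ ∈ A) (hε : 0 < ε) (hεx : ε ≤ ‖x₁ - x₂‖) (hδ : 0 ≤ δ)
    (hball : ∀ y₁ ∈ A, ∀ y₂ ∈ A, ‖y₁ - y₂‖ = ε → closedBall (midpoint ℝ y₁ y₂) δ ⊆ A)
    {v : E} (hv : ‖v‖ ≤ 1) :
    midpoint ℝ x₁ x₂ + (δ * ‖x₁ - x₂‖ / ε) • v ∈ A := by
  set m := midpoint ℝ x₁ x₂
  set d := ‖x₁ - x₂‖
  have hd : 0 < d := hε.trans_le hεx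
  set t := 1 - ε / d with ht_def
  have ht₀ : 0 ≤ t := sub_nonneg.2 ((div_le_one hd).2 hεx)
  have ht₁ : t < 1 := sub_lt_self _ (div_pos hε hd)
  have ht : (1 - t) * d = ε := by rw [ht_def, sub_sub_cancel, div_mul_cancel₀ _ hd.ne']
  set H := δ * d / ε
  have hδH : δ = H * (1 - t) := by simp only [H, ht_def, sub_sub_cancel]; field_simp
  -- the radii `r` with `m + r • v ∈ A` are closed under `r ↦ t * r + δ`, whose fixed point is `H`
  have hstep : ∀ r : ℝ, m + r • v ∈ A → m + (t * r + δ) • v ∈ A := fun r hr ↦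
    closedBall_lineMap_midpoint_subset hconv hx₁ hx₂ hr ht₀ ht₁.le ht hball <| by
      rw [mem_closedBall, AffineMap.lineMap_apply_module, dist_eq_norm]
      calc ‖m + (t * r + δ) • v - ((1 - t) • m + t • (m + r • v))‖ = ‖δ • v‖ := by
            congr 1; module
        _ ≤ δ := by rw [norm_smul, Real.norm_of_nonneg hδ]; exact mul_le_of_le_one_right hδ hv
  have hiter : ∀ k : ℕ, m + (H * (1 - t ^ k)) • v ∈ A := by
    intro k
    induction k with
    | zero => simpa using hconv.segment_subset hx₁ hx₂ (midpoint_mem_segment x₁ x₂)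
    | succ k ih => convert hstep _ ih using 3; rw [hδH]; ring
  have hlim : Filter.Tendsto (fun k : ℕ ↦ m + (H * (1 - t ^ k)) • v) Filter.atTop
      (nhds (m + H • v)) := by
    have := ((tendsto_pow_atTop_nhds_zero_of_lt_one ht₀ ht₁).const_sub 1).const_mul H
    simpa using tendsto_const_nhds.add (this.smul_const v)
  exact hcl.mem_of_tendsto hlim (Filter.Eventually.of_forall hiter)

end NormedSpace

theorem real_inner_midpoint {F : Type*} [NormedAddCommGroup F] [InnerProductSpace ℝ F]
    (p x₁ x₂ : F) : inner ℝ p (midpoint ℝ x₁ x₂) = (inner ℝ p x₁ + inner ℝ p x₂) / 2 := by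
  rw [midpoint_eq_smul_add, invOf_eq_inv, real_inner_smul_right, inner_add_right]
  ring

section EuclideanSpace

variable {n : ℕ} {A : Set (EuclideanSpace ℝ (Fin n))} {x₁ x₂ p₁ p₂ : EuclideanSpace ℝ (Fin n)}
  {ε : ℝ}

theorem inner_le_suppF (hA : IsCompact A) {x : EuclideanSpace ℝ (Fin n)} (hx : x ∈ A)
    (p : EuclideanSpace ℝ (Fin n)) : inner ℝ p x ≤ suppF p A :=
  le_csSup (hA.bddAbove_image (continuous_const.inner continuous_id).continuousOn)
    (mem_image_of_mem _ hx)

theorem mul_modConv_le_suppF_sub_inner_midpoint (hA : IsCompact A) (hconv : Convex ℝ A)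
    (hx₁ : x₁ ∈ A) (hx₂ : x₂ ∈ A) (hε : 0 < ε) (hεx : ε ≤ ‖x₁ - x₂‖)
    (p : EuclideanSpace ℝ (Fin n)) :
    ‖x₁ - x₂‖ / ε * ‖p‖ * modConv A ε ≤ suppF p A - inner ℝ p (midpoint ℝ x₁ x₂) := by
  have hk : 0 ≤ ‖x₁ - x₂‖ / ε * ‖p‖ := by positivity
  rw [← smul_eq_mul, modConv, ← Real.sSup_smul_of_nonneg hk]
  refine Real.sSup_le ?_ ?_
  · rintro _ ⟨δ, ⟨hδ, hball⟩, rfl⟩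
    have hv : ‖‖p‖⁻¹ • p‖ ≤ 1 := by
      rw [norm_smul, norm_inv, norm_norm]
      exact inv_mul_le_one_of_le₀ le_rfl (norm_nonneg p)
    have hmem := midpoint_add_smul_mem_of_le_norm_sub hconv hA.isClosed hx₁ hx₂ hε hεx hδ hball hv
    have hinner : inner ℝ p (midpoint ℝ x₁ x₂ + (δ * ‖x₁ - x₂‖ / ε) • ‖p‖⁻¹ • p) =
        inner ℝ p (midpoint ℝ x₁ x₂) + ‖x₁ - x₂‖ / ε * ‖p‖ * δ := by
      rw [inner_add_right, real_inner_smul_right, real_inner_smul_right,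
        real_inner_self_eq_norm_mul_norm, ← div_eq_inv_mul, mul_self_div_self]
      ring
    have := inner_le_suppF hA hmem p
    simp only [smul_eq_mul]
    linarith
  · exact sub_nonneg.2 <| inner_le_suppF hA
      (hconv.segment_subset hx₁ hx₂ (midpoint_mem_segment x₁ x₂)) p

theorem norm_sub_le_of_inner_eq_suppF (hA : IsCompact A) (hconv : Convex ℝ A) (hε : 0 < ε)
    (hx₁ : x₁ ∈ A) (hx₂ : x₂ ∈ A)
    (hs₁ : inner ℝ p₁ x₁ = suppF p₁ A) (hs₂ : inner ℝ p₂ x₂ = suppF p₂ A)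
    (h : ‖p₁ - p₂‖ * ε < 2 * (‖p₁‖ + ‖p₂‖) * modConv A ε) :
    ‖x₁ - x₂‖ ≤ ε := by
  by_contra! hεx
  have hd : 0 < ‖x₁ - x₂‖ := hε.trans hεx
  have h₁ := mul_modConv_le_suppF_sub_inner_midpoint hA hconv hx₁ hx₂ hε hεx.le p₁
  have h₂ := mul_modConv_le_suppF_sub_inner_midpoint hA hconv hx₁ hx₂ hε hεx.le p₂
  rw [← hs₁, real_inner_midpoint] at h₁
  rw [← hs₂, real_inner_midpoint] at h₂
  have hcs : inner ℝ (p₁ - p₂) (x₁ - x₂) ≤ ‖p₁ - p₂‖ * ‖x₁ - x₂‖ := real_inner_le_norm _ _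
  simp only [inner_sub_left, inner_sub_right] at hcs
  have := mul_lt_mul_of_pos_right h (div_pos hd hε)
  rw [mul_assoc, mul_div_cancel₀ _ hε.ne'] at this
  linarith

theorem abs_suppF_sub_suppF_sub_inner_le (hA : IsCompact A) (hx₁ : x₁ ∈ A) (hx₂ : x₂ ∈ A)
    (hs₁ : inner ℝ p₁ x₁ = suppF p₁ A) (hs₂ : inner ℝ p₂ x₂ = suppF p₂ A) :
    |suppF p₁ A - suppF p₂ A - inner ℝ x₂ (p₁ - p₂)| ≤ ‖p₁ - p₂‖ * ‖x₁ - x₂‖ := by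
  have h₁ := inner_le_suppF hA hx₂ p₁
  have h₂ := inner_le_suppF hA hx₁ p₂
  have hcs : inner ℝ (p₁ - p₂) (x₁ - x₂) ≤ ‖p₁ - p₂‖ * ‖x₁ - x₂‖ := real_inner_le_norm _ _
  simp only [inner_sub_left, inner_sub_right] at hcs
  rw [← hs₁, ← hs₂, inner_sub_right, real_inner_comm p₁, real_inner_comm p₂,
    abs_of_nonneg (by linarith)]
  linarith

end EuclideanSpace

theorem suppF_first_order_expansion_general
    (n : ℕ) (A : Set (EuclideanSpace ℝ (Fin n)))
    (hA : IsCompact A) (hconv : Convex ℝ A)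
    (Δ εΔ : ℝ) (hΔ : Δ ∈ Set.Ioo (0 : ℝ) (1/2))
    (hεΔ : εΔ ∈ Set.Ioo 0 (Metric.diam A))
    (heq : modConv A εΔ / εΔ = Δ / (4 - Δ^2))
    (p₁ p₂ x₁ x₂ : EuclideanSpace ℝ (Fin n))
    (hp₁ : ‖p₁‖ = 1) (hp₂ : 1 - Δ^2 / 2 ≤ ‖p₂‖)
    (hpp : ‖p₁ - p₂‖ < Δ)
    (hx₁ : x₁ ∈ A) (hx₂ : x₂ ∈ A)
    (hs₁ : (inner ℝ p₁ x₁ : ℝ) = suppF p₁ A) (hs₂ : (inner ℝ p₂ x₂ : ℝ) = suppF p₂ A) :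
    |suppF p₁ A - suppF p₂ A - (inner ℝ x₂ (p₁ - p₂) : ℝ)| ≤ εΔ * Δ ∧
    |suppF p₂ A - suppF p₁ A - (inner ℝ x₁ (p₂ - p₁) : ℝ)| ≤ εΔ * Δ := by
  obtain ⟨hΔ₀, hΔ₁⟩ := hΔ
  have hεΔ₀ : 0 < εΔ := hεΔ.1
  have h4 : 0 < 4 - Δ ^ 2 := by nlinarith
  have hδ : modConv A εΔ = Δ / (4 - Δ ^ 2) * εΔ := (div_eq_iff hεΔ₀.ne').1 heq
  have hclose : ‖x₁ - x₂‖ ≤ εΔ := by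
    refine norm_sub_le_of_inner_eq_suppF hA hconv hεΔ₀ hx₁ hx₂ hs₁ hs₂ ?_
    calc ‖p₁ - p₂‖ * εΔ < Δ * εΔ := mul_lt_mul_of_pos_right hpp hεΔ₀
      _ = (4 - Δ ^ 2) * (Δ / (4 - Δ ^ 2) * εΔ) := by field_simp
      _ ≤ 2 * (‖p₁‖ + ‖p₂‖) * modConv A εΔ := by
        rw [hδ, hp₁]; gcongr; linarith
  have hbound : ‖p₁ - p₂‖ * ‖x₁ - x₂‖ ≤ εΔ * Δ := by
    rw [mul_comm εΔ]; exact mul_le_mul hpp.le hclose (norm_nonneg _) hΔ₀.le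
  refine ⟨(abs_suppF_sub_suppF_sub_inner_le hA hx₁ hx₂ hs₁ hs₂).trans hbound,
    (abs_suppF_sub_suppF_sub_inner_le hA hx₂ hx₁ hs₂ hs₁).trans ?_⟩
  rwa [norm_sub_rev p₂, norm_sub_rev x₂]

/-- Theorem 2.5: first-order expansion of the supporting function,
with error at most `ε(Δ)·Δ`. -/
theorem suppF_first_order_expansion
    (n : ℕ) (A : Set (EuclideanSpace ℝ (Fin n)))
    (hA : IsCompact A) (hconv : Convex ℝ A) (huc : UnifConvex A)
    (Δ εΔ : ℝ) (hΔ : Δ ∈ Set.Ioo (0 : ℝ) (1/2))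
    (hεΔ : εΔ ∈ Set.Ioo 0 (Metric.diam A))
    (heq : modConv A εΔ / εΔ = Δ / (4 - Δ^2))
    (p₁ p₂ x₁ x₂ : EuclideanSpace ℝ (Fin n))
    (hp₁ : ‖p₁‖ = 1) (hp₂ : 1 - Δ^2 / 2 ≤ ‖p₂‖) (hp₂' : ‖p₂‖ ≤ 1)
    (hpp : ‖p₁ - p₂‖ < Δ)
    (hx₁ : x₁ ∈ A) (hx₂ : x₂ ∈ A)
    (hs₁ : (inner ℝ p₁ x₁ : ℝ) = suppF p₁ A) (hs₂ : (inner ℝ p₂ x₂ : ℝ) = suppF p₂ A) :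
    |suppF p₁ A - suppF p₂ A - (inner ℝ x₂ (p₁ - p₂) : ℝ)| ≤ εΔ * Δ ∧
    |suppF p₂ A - suppF p₁ A - (inner ℝ x₁ (p₂ - p₁) : ℝ)| ≤ εΔ * Δ :=
  suppF_first_order_expansion_general n A hA hconv Δ εΔ hΔ hεΔ heq p₁ p₂ x₁ x₂ hp₁ hp₂ hpp hx₁ hx₂
    hs₁ hs₂
end

section
/- Let A, B ⊂ ℝⁿ be convex compacta with B compact and uniformly convex with modulus of convexity δ_B, and suppose the closed ball B_{r₀}(a) ⊆ B ⊖ A ⊆ B_d(a) for some r₀ > 0, d > 0, a ∈ ℝⁿ. Let 𝒞 be a grid with step Δ ∈ (0,1/2), suppose ε_Δ ∈ (0, diam B) satisfies δ_B(ε_Δ)/ε_Δ = Δ/(4 − Δ²), and set Ã = {x ∈ ℝⁿ : ⟨p,x⟩ ≤ s(p,B) − s(p,A) for all p ∈ 𝒞}. Then h(B ⊖ A, Ã) ≤ (8d/(7r₀))·ε_Δ·Δ. -/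
open Set Metric Pointwise

/-!
The half-spaces `⟪p, x⟫ ≤ s(p, B) - s(p, A)` with `‖p‖ = 1` cut out `B ⊖ A` exactly (by
Hahn–Banach separation), so `B ⊖ A ⊆ Ã`. For the converse, write a unit `p ∉ 𝒞` as a positive
combination `∑ αᵢ qᵢ` of pairwise `Δ`-close grid vectors. Then `⟪qⱼ, qᵢ⟫ ≥ 1 - Δ²/2 ≥ 7/8`, so
`∑ αᵢ ≤ 8/7`. If the maximizers of `⟪q₁, ·⟫` and `⟪q₂, ·⟫` on `B` were more than `ε` apart, the
balls of radius `δ_B(ε)` at the midpoints of two chords of length `ε` issuing from them would give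
`4 δ_B(ε) ≤ ε ‖q₁ - q₂‖`; the choice `δ_B(ε_Δ)/ε_Δ = Δ/(4 - Δ²)` rules this out. With all
maximizers `ε_Δ`-close, `∑ αᵢ s(qᵢ, B) ≤ s(p, B) + Δ ε_Δ ∑ αᵢ`, while `s(p, A) ≤ ∑ αᵢ s(qᵢ, A)`
by sublinearity. So each `x ∈ Ã` violates every unit half-space by at most `c = (8/7) Δ ε_Δ`.
Since `B_{r₀}(a) ⊆ B ⊖ A` leaves every unit half-space a slack of at least `r₀` at `a`, the
homothety of centre `a` and ratio `r₀ / (r₀ + c)` moves `x` into `B ⊖ A ⊆ B_d(a)`, over a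
distance at most `c d / r₀`.
-/

open scoped RealInnerProductSpace

section SupportFunction

variable {n : ℕ} {S : Set (EuclideanSpace ℝ (Fin n))} {p x : EuclideanSpace ℝ (Fin n)}

lemma le_suppF (hS : IsCompact S) (hx : x ∈ S) : ⟪p, x⟫ ≤ suppF p S :=
  le_csSup (hS.image (continuous_const.inner continuous_id)).bddAbove ⟨x, hx, rfl⟩

lemma suppF_le {c : ℝ} (hS : S.Nonempty) (h : ∀ y ∈ S, ⟪p, y⟫ ≤ c) : suppF p S ≤ c :=
  csSup_le (hS.image _) (by rintro _ ⟨y, hy, rfl⟩; exact h y hy)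

lemma suppF_eq_of_isMaxOn (hx : x ∈ S) (hmax : IsMaxOn (fun y => ⟪p, y⟫) S x) :
    suppF p S = ⟪p, x⟫ :=
  IsGreatest.csSup_eq ⟨⟨x, hx, rfl⟩, by rintro _ ⟨y, hy, rfl⟩; exact hmax hy⟩

lemma suppF_smul {t : ℝ} (ht : 0 ≤ t) : suppF (t • p) S = t * suppF p S := by
  simp only [suppF, real_inner_smul_left]
  rw [← smul_eq_mul, ← Real.sSup_smul_of_nonneg ht, ← Set.image_smul, Set.image_image]
  rfl

lemma suppF_zero : suppF (0 : EuclideanSpace ℝ (Fin n)) S = 0 := by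
  simpa using suppF_smul (p := 0) (S := S) le_rfl

lemma suppF_sum_smul_le {ι : Type*} [Fintype ι] (hS : IsCompact S) (hne : S.Nonempty)
    {α : ι → ℝ} (hα : ∀ i, 0 ≤ α i) (q : ι → EuclideanSpace ℝ (Fin n)) :
    suppF (∑ i, α i • q i) S ≤ ∑ i, α i * suppF (q i) S :=
  suppF_le hne fun y hy => by
    rw [sum_inner]
    refine Finset.sum_le_sum fun i _ => ?_
    rw [real_inner_smul_left]
    exact mul_le_mul_of_nonneg_left (le_suppF hS hy) (hα i)

end SupportFunction

section GeometricDifference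

variable {n : ℕ} {A B : Set (EuclideanSpace ℝ (Fin n))} {x : EuclideanSpace ℝ (Fin n)}

lemma inner_le_suppF_sub_suppF_of_mem_geomDiff (hB : IsCompact B) (hA : A.Nonempty)
    (hx : x ∈ geomDiff B A) (p : EuclideanSpace ℝ (Fin n)) :
    ⟪p, x⟫ ≤ suppF p B - suppF p A := by
  have hA_le : suppF p A ≤ suppF p B - ⟪p, x⟫ := suppF_le hA fun y hy => by
    have hxy := le_suppF (p := p) hB (hx y hy)
    rw [inner_add_right] at hxy
    linarith
  linarith

lemma inner_le_suppF_sub_suppF_of_forall_norm_eq_one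
    (h : ∀ p, ‖p‖ = 1 → ⟪p, x⟫ ≤ suppF p B - suppF p A) (p : EuclideanSpace ℝ (Fin n)) :
    ⟪p, x⟫ ≤ suppF p B - suppF p A := by
  rcases eq_or_ne p 0 with rfl | hp
  · simp [suppF_zero]
  have hunit := h _ (norm_smul_inv_norm (𝕜 := ℝ) hp)
  rw [← smul_inv_smul₀ (norm_ne_zero_iff.2 hp) p, real_inner_smul_left,
    suppF_smul (norm_nonneg _), suppF_smul (norm_nonneg _), ← mul_sub]
  exact mul_le_mul_of_nonneg_left hunit (norm_nonneg _)

lemma mem_geomDiff_of_forall_inner_le (hB : IsCompact B) (hBc : Convex ℝ B) (hBne : B.Nonempty)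
    (hA : IsCompact A) (h : ∀ p, ‖p‖ = 1 → ⟪p, x⟫ ≤ suppF p B - suppF p A) :
    x ∈ geomDiff B A := by
  intro y hy
  by_contra hxy
  obtain ⟨f, u, hfB, hfu⟩ := geometric_hahn_banach_closed_point hBc hB.isClosed hxy
  obtain ⟨p, hpf⟩ : ∃ p : EuclideanSpace ℝ (Fin n), ∀ z, ⟪p, z⟫ = f z :=
    ⟨_, fun _ => InnerProductSpace.toDual_symm_apply⟩
  have hBu : suppF p B ≤ u := suppF_le hBne fun z hz => (hpf z).trans_le (hfB z hz).le
  have hyA : ⟪p, y⟫ ≤ suppF p A := le_suppF hA hy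
  have hxp := inner_le_suppF_sub_suppF_of_forall_norm_eq_one h p
  rw [← hpf, inner_add_right] at hfu
  linarith

lemma nonempty_of_isBounded_geomDiff (hB : B.Nontrivial) (h : Bornology.IsBounded (geomDiff B A)) :
    A.Nonempty := by
  by_contra hA
  rw [not_nonempty_iff_eq_empty] at hA
  have : Nontrivial (EuclideanSpace ℝ (Fin n)) := Set.nontrivial_of_nontrivial hB
  refine NormedSpace.unbounded_univ ℝ _ (h.subset fun z _ => ?_)
  simp [geomDiff, hA]

end GeometricDifference

section ModulusOfConvexity

variable {n : ℕ} {B : Set (EuclideanSpace ℝ (Fin n))} {ε : ℝ}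

lemma closedBall_midpoint_modConv_subset_s10 (hB : IsClosed B) (hδ : 0 < modConv B ε)
    {x₁ x₂ : EuclideanSpace ℝ (Fin n)} (h₁ : x₁ ∈ B) (h₂ : x₂ ∈ B) (h : ‖x₁ - x₂‖ = ε) :
    closedBall (midpoint ℝ x₁ x₂) (modConv B ε) ⊆ B := by
  have hne : {δ : ℝ | 0 ≤ δ ∧ ∀ x₁ ∈ B, ∀ x₂ ∈ B, ‖x₁ - x₂‖ = ε →
      closedBall (midpoint ℝ x₁ x₂) δ ⊆ B}.Nonempty :=
    nonempty_iff_ne_empty.2 fun h => hδ.ne' (by rw [modConv, h, Real.sSup_empty])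
  rw [← closure_ball _ hδ.ne']
  refine hB.closure_subset_iff.2 fun z hz => ?_
  obtain ⟨δ, hδS, hzδ⟩ := exists_lt_of_lt_csSup hne (mem_ball.1 hz)
  exact hδS.2 x₁ h₁ x₂ h₂ h (mem_closedBall.2 hzδ.le)

lemma two_mul_modConv_le_inner_sub (hB : IsClosed B) (hδ : 0 < modConv B ε)
    {q x y : EuclideanSpace ℝ (Fin n)} (hq : ‖q‖ = 1) (hx : x ∈ B) (hy : y ∈ B)
    (hxy : ‖x - y‖ = ε) (hmax : IsMaxOn (fun z => ⟪q, z⟫) B x) :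
    2 * modConv B ε ≤ ⟪q, x - y⟫ := by
  have hz : midpoint ℝ x y + modConv B ε • q ∈ B :=
    closedBall_midpoint_modConv_subset_s10 hB hδ hx hy hxy (by simp [norm_smul, hq, abs_of_pos hδ])
  have hle : ⟪q, midpoint ℝ x y + modConv B ε • q⟫ ≤ ⟪q, x⟫ := hmax hz
  simp only [midpoint_eq_smul_add, invOf_eq_inv, inner_add_right, real_inner_smul_right,
    real_inner_self_eq_norm_sq, hq] at hle
  rw [inner_sub_right]
  linarith

lemma two_mul_modConv_mul_norm_sub_le (hB : IsClosed B) (hBc : Convex ℝ B)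
    (hδ : 0 < modConv B ε) (hε : 0 < ε) {q x y : EuclideanSpace ℝ (Fin n)} (hq : ‖q‖ = 1)
    (hx : x ∈ B) (hy : y ∈ B) (hεxy : ε ≤ ‖x - y‖) (hmax : IsMaxOn (fun z => ⟪q, z⟫) B x) :
    2 * modConv B ε * ‖x - y‖ ≤ ε * ⟪q, x - y⟫ := by
  have hD : 0 < ‖x - y‖ := hε.trans_le hεxy
  set t := ε / ‖x - y‖
  have ht : t ∈ Icc (0 : ℝ) 1 := ⟨by positivity, div_le_one_of_le₀ hεxy hD.le⟩
  have hdist : ‖x - (x + t • (y - x))‖ = ε := by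
    rw [sub_add_cancel_left, norm_neg, norm_smul, Real.norm_of_nonneg ht.1, norm_sub_rev,
      div_mul_cancel₀ _ hD.ne']
  have hδt := two_mul_modConv_le_inner_sub hB hδ hq hx (hBc.add_smul_sub_mem hx hy ht) hdist hmax
  rw [sub_add_cancel_left, inner_neg_right, real_inner_smul_right, ← mul_neg, ← inner_neg_right,
    neg_sub] at hδt
  calc 2 * modConv B ε * ‖x - y‖ ≤ t * ⟪q, x - y⟫ * ‖x - y‖ := by gcongr
    _ = ε * ⟪q, x - y⟫ := by simp only [t]; field_simp

lemma norm_sub_le_of_isMaxOn (hB : IsClosed B) (hBc : Convex ℝ B) (hε : 0 < ε)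
    {q₁ q₂ x₁ x₂ : EuclideanSpace ℝ (Fin n)} (hq₁ : ‖q₁‖ = 1) (hq₂ : ‖q₂‖ = 1)
    (hq : ε * ‖q₁ - q₂‖ < 4 * modConv B ε) (hx₁ : x₁ ∈ B) (hx₂ : x₂ ∈ B)
    (hmax₁ : IsMaxOn (fun z => ⟪q₁, z⟫) B x₁) (hmax₂ : IsMaxOn (fun z => ⟪q₂, z⟫) B x₂) :
    ‖x₁ - x₂‖ ≤ ε := by
  have hδ : 0 < modConv B ε := by nlinarith [norm_nonneg (q₁ - q₂)]
  by_contra! h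
  have h₁ := two_mul_modConv_mul_norm_sub_le hB hBc hδ hε hq₁ hx₁ hx₂ h.le hmax₁
  have h₂ := two_mul_modConv_mul_norm_sub_le hB hBc hδ hε hq₂ hx₂ hx₁
    (by rw [norm_sub_rev]; exact h.le) hmax₂
  have hcs : ⟪q₁, x₁ - x₂⟫ + ⟪q₂, x₂ - x₁⟫ ≤ ‖q₁ - q₂‖ * ‖x₁ - x₂‖ :=
    calc ⟪q₁, x₁ - x₂⟫ + ⟪q₂, x₂ - x₁⟫ = ⟪q₁ - q₂, x₁ - x₂⟫ := by
          rw [inner_sub_left, ← neg_sub x₁ x₂, inner_neg_right]; ring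
      _ ≤ ‖q₁ - q₂‖ * ‖x₁ - x₂‖ := real_inner_le_norm _ _
  rw [norm_sub_rev] at h₂
  nlinarith [mul_lt_mul_of_pos_right hq (hε.trans h), mul_le_mul_of_nonneg_left hcs hε.le]

end ModulusOfConvexity

section InnerProductSpace

variable {E : Type*} [NormedAddCommGroup E] [InnerProductSpace ℝ E]

lemma one_sub_sq_div_two_le_inner {u v : E} {Δ : ℝ} (hu : ‖u‖ = 1) (hv : ‖v‖ = 1)
    (h : ‖u - v‖ ≤ Δ) : 1 - Δ ^ 2 / 2 ≤ ⟪u, v⟫ := by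
  have hsq := norm_sub_sq_real u v
  rw [hu, hv] at hsq
  nlinarith [pow_le_pow_left₀ (norm_nonneg _) h 2]

lemma mul_sum_le_norm_sum_smul {ι : Type*} [Fintype ι] {u : E} {q : ι → E} {α : ι → ℝ}
    {c : ℝ} (hu : ‖u‖ = 1) (hα : ∀ i, 0 ≤ α i) (hc : ∀ i, c ≤ ⟪u, q i⟫) :
    c * ∑ i, α i ≤ ‖∑ i, α i • q i‖ :=
  calc c * ∑ i, α i ≤ ∑ i, α i * ⟪u, q i⟫ := by
        rw [Finset.mul_sum]
        exact Finset.sum_le_sum fun i _ => by nlinarith [hc i, hα i]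
    _ = ⟪u, ∑ i, α i • q i⟫ := by simp only [inner_sum, real_inner_smul_right]
    _ ≤ ‖∑ i, α i • q i‖ := by simpa [hu] using real_inner_le_norm u (∑ i, α i • q i)

lemma exists_mem_dist_le_of_forall_inner_le {F : Set E} {f : E → ℝ} {a x : E} {r d c : ℝ}
    (hr : 0 < r) (hc : 0 ≤ c) (hF : ∀ y, (∀ p, ‖p‖ = 1 → ⟪p, y⟫ ≤ f p) → y ∈ F)
    (ha : ∀ p, ‖p‖ = 1 → ⟪p, a⟫ + r ≤ f p) (hd : F ⊆ closedBall a d)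
    (hx : ∀ p, ‖p‖ = 1 → ⟪p, x⟫ ≤ f p + c) :
    ∃ y ∈ F, dist x y ≤ c * d / r := by
  set t := r / (r + c)
  have ht : 0 < t := by positivity
  have hy : a + t • (x - a) ∈ F := hF _ fun p hp => by
    have hpa := ha p hp
    have hpx := hx p hp
    rw [inner_add_right, real_inner_smul_right, inner_sub_right]
    have key : t * (f p - ⟪p, a⟫ + c) ≤ f p - ⟪p, a⟫ := by
      rw [div_mul_eq_mul_div, div_le_iff₀ (by positivity)]
      nlinarith
    nlinarith
  refine ⟨_, hy, ?_⟩
  have hya : t * ‖x - a‖ ≤ d := by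
    simpa [dist_eq_norm, norm_smul, abs_of_pos ht] using hd hy
  calc dist x (a + t • (x - a)) = (1 - t) * ‖x - a‖ := by
        rw [dist_eq_norm, show x - (a + t • (x - a)) = (1 - t) • (x - a) by module, norm_smul,
          Real.norm_of_nonneg (sub_nonneg.2 (div_le_one_of_le₀ (by linarith) (by positivity)))]
    _ = c / r * (t * ‖x - a‖) := by simp only [t]; field_simp; ring
    _ ≤ c / r * d := by gcongr
    _ = c * d / r := by ring

end InnerProductSpace

section Grid

variable {n : ℕ} {A B : Set (EuclideanSpace ℝ (Fin n))} {ε Δ : ℝ}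

lemma sum_mul_suppF_le {ι : Type*} [Fintype ι] [Nonempty ι] (hB : IsCompact B)
    (hBc : Convex ℝ B) (hBne : B.Nonempty) (hε : 0 < ε) (hΔε : ε * Δ ≤ 4 * modConv B ε)
    {q : ι → EuclideanSpace ℝ (Fin n)} {α : ι → ℝ} (hq : ∀ i, ‖q i‖ = 1)
    (hqΔ : ∀ i j, ‖q i - q j‖ < Δ) (hα : ∀ i, 0 ≤ α i) :
    ∑ i, α i * suppF (q i) B ≤ suppF (∑ i, α i • q i) B + Δ * ε * ∑ i, α i := by
  have hmax : ∀ i, ∃ x ∈ B, IsMaxOn (fun z => ⟪q i, z⟫) B x := fun i =>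
    hB.exists_isMaxOn hBne (by fun_prop)
  choose x hxB hxmax using hmax
  obtain ⟨j⟩ := ‹Nonempty ι›
  have hsupp : ∀ i, suppF (q i) B ≤ ⟪q i, x j⟫ + Δ * ε := fun i => by
    have hclose : ‖x i - x j‖ ≤ ε := norm_sub_le_of_isMaxOn hB.isClosed hBc hε (hq i) (hq j)
      (by nlinarith [mul_lt_mul_of_pos_left (hqΔ i j) hε]) (hxB i) (hxB j) (hxmax i) (hxmax j)
    have hj : ⟪q j, x i⟫ ≤ ⟪q j, x j⟫ := hxmax j (hxB i)
    have hcs : ⟪q i - q j, x i - x j⟫ ≤ Δ * ε :=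
      (real_inner_le_norm _ _).trans
        (mul_le_mul (hqΔ i j).le hclose (norm_nonneg _) ((norm_nonneg _).trans (hqΔ i j).le))
    rw [suppF_eq_of_isMaxOn (hxB i) (hxmax i)]
    simp only [inner_sub_left, inner_sub_right] at hcs
    linarith
  calc ∑ i, α i * suppF (q i) B ≤ ∑ i, α i * (⟪q i, x j⟫ + Δ * ε) :=
        Finset.sum_le_sum fun i _ => mul_le_mul_of_nonneg_left (hsupp i) (hα i)
    _ = ⟪∑ i, α i • q i, x j⟫ + Δ * ε * ∑ i, α i := by
        simp only [mul_add, Finset.sum_add_distrib, sum_inner, real_inner_smul_left,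
          Finset.mul_sum]
        exact congrArg _ (Finset.sum_congr rfl fun i _ => by ring)
    _ ≤ suppF (∑ i, α i • q i) B + Δ * ε * ∑ i, α i := by
        gcongr
        exact le_suppF hB (hxB j)

lemma inner_le_suppF_sub_suppF_add_of_isGrid (hA : IsCompact A) (hAne : A.Nonempty)
    (hB : IsCompact B) (hBc : Convex ℝ B) (hBne : B.Nonempty) (hε : 0 < ε)
    (hΔ : Δ ∈ Icc (0 : ℝ) (1 / 2)) (hΔε : ε * Δ ≤ 4 * modConv B ε)
    {C : Finset (EuclideanSpace ℝ (Fin n))} (hC : IsGrid C Δ) {x : EuclideanSpace ℝ (Fin n)}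
    (hx : ∀ p ∈ C, ⟪p, x⟫ ≤ suppF p B - suppF p A) {p : EuclideanSpace ℝ (Fin n)}
    (hp : ‖p‖ = 1) :
    ⟪p, x⟫ ≤ suppF p B - suppF p A + 8 / 7 * (Δ * ε) := by
  by_cases hpC : p ∈ C
  · linarith [hx p hpC, mul_nonneg hΔ.1 hε.le]
  have hp0 : p ≠ 0 := by rintro rfl; simp at hp
  obtain ⟨k, q, α, hqC, hα, rfl, hqΔ⟩ := hC.2 _ hp0 (by rwa [hp, inv_one, one_smul])
  have : Nonempty (Fin k) := by
    by_contra h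
    simp [not_nonempty_iff.1 h] at hp0
  have hq : ∀ i, ‖q i‖ = 1 := fun i => hC.1 _ (hqC i)
  obtain ⟨j⟩ := ‹Nonempty (Fin k)›
  have hαsum : ∑ i, α i ≤ 8 / 7 := by
    have h78 := mul_sum_le_norm_sum_smul (hq j) (fun i => (hα i).le) (c := 1 - Δ ^ 2 / 2)
      fun i => one_sub_sq_div_two_le_inner (hq j) (hq i) ((norm_sub_rev _ _).trans_le (hqΔ i j).le)
    rw [hp] at h78
    have h78' : 7 / 8 ≤ 1 - Δ ^ 2 / 2 := by nlinarith [hΔ.1, hΔ.2]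
    nlinarith [Finset.sum_nonneg fun i (_ : i ∈ Finset.univ) => (hα i).le]
  have hsuppB := sum_mul_suppF_le hB hBc hBne hε hΔε hq hqΔ fun i => (hα i).le
  have hsuppA := suppF_sum_smul_le hA hAne (fun i => (hα i).le) q
  calc ⟪∑ i, α i • q i, x⟫ = ∑ i, α i * ⟪q i, x⟫ := by
        simp only [sum_inner, real_inner_smul_left]
    _ ≤ ∑ i, α i * (suppF (q i) B - suppF (q i) A) :=
        Finset.sum_le_sum fun i _ => mul_le_mul_of_nonneg_left (hx _ (hqC i)) (hα i).le
    _ = ∑ i, α i * suppF (q i) B - ∑ i, α i * suppF (q i) A := by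
        simp only [mul_sub, Finset.sum_sub_distrib]
    _ ≤ suppF (∑ i, α i • q i) B - suppF (∑ i, α i • q i) A + Δ * ε * ∑ i, α i := by
        linarith
    _ ≤ _ := by linarith [mul_le_mul_of_nonneg_left hαsum (mul_nonneg hΔ.1 hε.le)]

end Grid

theorem hausdorffDist_geomDiff_presupporting_general
    (n : ℕ) (A B : Set (EuclideanSpace ℝ (Fin n)))
    (hA : IsCompact A)
    (hB : IsCompact B) (hBc : Convex ℝ B)
    (r₀ d : ℝ) (hr₀ : 0 < r₀) (hd : 0 < d) (a : EuclideanSpace ℝ (Fin n))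
    (hball : Metric.closedBall a r₀ ⊆ geomDiff B A)
    (hdball : geomDiff B A ⊆ Metric.closedBall a d)
    (Δ εΔ : ℝ) (hΔ : Δ ∈ Set.Ioo (0 : ℝ) (1/2))
    (hεΔ : εΔ ∈ Set.Ioo 0 (Metric.diam B))
    (heq : modConv B εΔ / εΔ = Δ / (4 - Δ^2))
    (C : Finset (EuclideanSpace ℝ (Fin n))) (hC : IsGrid C Δ) :
    Metric.hausdorffDist (geomDiff B A)
      {x : EuclideanSpace ℝ (Fin n) | ∀ p ∈ C, (inner ℝ p x : ℝ) ≤ suppF p B - suppF p A}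
      ≤ 8 * d / (7 * r₀) * εΔ * Δ := by
  obtain ⟨hΔ0, hΔ1⟩ := hΔ
  obtain ⟨hε0, hεB⟩ := hεΔ
  have hBnt : B.Nontrivial := not_subsingleton_iff.1 fun h => by
    rw [diam_subsingleton h] at hεB; linarith
  have hAne := nonempty_of_isBounded_geomDiff hBnt (isBounded_closedBall.subset hdball)
  have hmod : εΔ * Δ ≤ 4 * modConv B εΔ := by
    rw [(div_eq_iff hε0.ne').1 heq, div_mul_eq_mul_div, mul_div_assoc',
      le_div_iff₀ (by nlinarith)]
    nlinarith [mul_pos hε0 hΔ0]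
  have ha : ∀ p, ‖p‖ = 1 → ⟪p, a⟫ + r₀ ≤ suppF p B - suppF p A := fun p hp => by
    have hmem : a + r₀ • p ∈ geomDiff B A := hball (by simp [norm_smul, hp, abs_of_pos hr₀])
    simpa [inner_add_right, real_inner_smul_right, real_inner_self_eq_norm_sq, hp] using
      inner_le_suppF_sub_suppF_of_mem_geomDiff hB hAne hmem p
  refine hausdorffDist_le_of_mem_dist (by positivity)
    (fun x hx => ⟨x, fun p _ => inner_le_suppF_sub_suppF_of_mem_geomDiff hB hAne hx p,
      by rw [dist_self]; positivity⟩) fun x hx => ?_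
  obtain ⟨y, hy, hxy⟩ := exists_mem_dist_le_of_forall_inner_le hr₀ (by positivity)
    (fun y => mem_geomDiff_of_forall_inner_le hB hBc hBnt.nonempty hA) ha hdball
    fun p => inner_le_suppF_sub_suppF_add_of_isGrid hA hAne hB hBc hBnt.nonempty hε0
      ⟨hΔ0.le, hΔ1.le⟩ hmod hC hx
  exact ⟨y, hy, hxy.trans_eq (by field_simp)⟩

/-- Theorem 3.1: approximation of the geometric difference via the
presupporting function `f(p) = s(p,B) - s(p,A)`. -/
theorem hausdorffDist_geomDiff_presupporting
    (n : ℕ) (A B : Set (EuclideanSpace ℝ (Fin n)))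
    (hA : IsCompact A) (hAc : Convex ℝ A)
    (hB : IsCompact B) (hBc : Convex ℝ B) (hucB : UnifConvex B)
    (r₀ d : ℝ) (hr₀ : 0 < r₀) (hd : 0 < d) (a : EuclideanSpace ℝ (Fin n))
    (hball : Metric.closedBall a r₀ ⊆ geomDiff B A)
    (hdball : geomDiff B A ⊆ Metric.closedBall a d)
    (Δ εΔ : ℝ) (hΔ : Δ ∈ Set.Ioo (0 : ℝ) (1/2))
    (hεΔ : εΔ ∈ Set.Ioo 0 (Metric.diam B))
    (heq : modConv B εΔ / εΔ = Δ / (4 - Δ^2))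
    (C : Finset (EuclideanSpace ℝ (Fin n))) (hC : IsGrid C Δ) :
    Metric.hausdorffDist (geomDiff B A)
      {x : EuclideanSpace ℝ (Fin n) | ∀ p ∈ C, (inner ℝ p x : ℝ) ≤ suppF p B - suppF p A}
      ≤ 8 * d / (7 * r₀) * εΔ * Δ :=
  hausdorffDist_geomDiff_presupporting_general n A B hA hB hBc r₀ d hr₀ hd a hball hdball Δ εΔ hΔ
    hεΔ heq C hC
end
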